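/- Let k ≥ 1 be an integer and let b : ℝ → ℝ be of class C^{k+1} with all derivatives of order 0 to k+1 bounded. Let i be an integer with i ≥ 2‖b'‖_∞ and i ≥ 1. Then the map y ↦ y + b(y)/i is an increasing C^{k+1}-diffeomorphism from ℝ onto ℝ, and its inverse τ_i (defined by τ_i(y) + b(τ_i(y))/i = y) is C^{k+1} and satisfies, for constants c > 0 and K > 0 depending only on k and the bounds on b (not on i): |τ_i(y) − y| ≤ K/i, |τ_i'(y) − 1| ≤ K/i, and c < τ_i'(y) ≤ K for all y. Moreover there exist functions β^i_{l,r} : ℝ → ℝ, for 0 ≤ r ≤ l ≤ k, with Σ_{r=0}^{l} i|β^i_{l,r}(y)| ≤ K for all y, such that for every φ ∈ C^l(ℝ) the l-th derivative of y ↦ φ(τ_i(y))τ_i'(y) equals φ^{(l)}(τ_i(y)) + Σ_{r=0}^{l} β^i_{l,r}(y) φ^{(r)}(τ_i(y)). -/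

import Mathlib

/-!
The map `f y = y + b y / t` has `f' = 1 + b' / t ∈ [1/2, 3/2]`, so it is an increasing
diffeomorphism, and its inverse satisfies `τ' = 1 / (1 + b'(τ) / t) ∈ [2/3, 2]`,
`τ - id = -b(τ) / t` and `τ' - 1 = -b'(τ) τ' / t`. Differentiating once more gives
`τ'' = -b''(τ) τ'³ / t`, whose right-hand side involves no derivative of `τ` beyond the first;
by induction (Leibniz and Faà di Bruno) all derivatives of `τ'` of order `≤ k` are bounded and
those of `τ' - 1` are `O(1/t)`, uniformly in `b` and `t`. Repeated differentiation of
`φ(τ) τ'` produces coefficients `β_{l,r}` through a recursion that only multiplies by `τ'`,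
differentiates, and adds `τ' - 1`; each of these keeps the derivatives of the appropriate order
`O(1/t)`.
-/

open Finset

theorem Finset.exists_le_of_forall_exists_le {α β : Type*} (s : Finset α) {f : α → β → ℝ}
    (h : ∀ a ∈ s, ∃ C, ∀ x, f a x ≤ C) : ∃ C, ∀ a ∈ s, ∀ x, f a x ≤ C := by
  choose! C hC using h
  exact ⟨∑ a ∈ s, |C a|, fun a ha x => (hC a ha x).trans
    ((le_abs_self _).trans (single_le_sum (fun b _ => abs_nonneg (C b)) ha))⟩

section UniformDerivBound

variable {ι : Type*}

def UniformDerivBound (n : ℕ) (ε : ι → ℝ) (F : ι → ℝ → ℝ) : Prop :=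
  (∀ a, ContDiff ℝ n (F a)) ∧ ∃ C, ∀ a, ∀ j ≤ n, ∀ y, |iteratedDeriv j (F a) y| ≤ C * ε a

namespace UniformDerivBound

variable {n : ℕ} {ε : ι → ℝ} {F G : ι → ℝ → ℝ}

lemma mono {m : ℕ} (hF : UniformDerivBound n ε F) (hmn : m ≤ n) : UniformDerivBound m ε F :=
  ⟨fun a => (hF.1 a).of_le (by exact_mod_cast hmn),
    hF.2.imp fun _ hC a j hj => hC a j (hj.trans hmn)⟩

lemma mono_weight {δ : ι → ℝ} (hF : UniformDerivBound n ε F) (hε : ∀ a, 0 ≤ ε a)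
    (hεδ : ∀ a, ε a ≤ δ a) : UniformDerivBound n δ F := by
  obtain ⟨C, hC⟩ := hF.2
  refine ⟨hF.1, max C 0, fun a j hj y => ?_⟩
  calc |iteratedDeriv j (F a) y| ≤ C * ε a := hC a j hj y
    _ ≤ max C 0 * ε a := mul_le_mul_of_nonneg_right (le_max_left _ _) (hε a)
    _ ≤ max C 0 * δ a := mul_le_mul_of_nonneg_left (hεδ a) (le_max_right _ _)

lemma zero : UniformDerivBound n ε (fun _ _ => 0) :=
  ⟨fun _ => contDiff_const, 0, fun a j _ y => by simp⟩

lemma const {c : ι → ℝ} (hc : ∀ a, |c a| ≤ ε a) : UniformDerivBound n ε (fun a _ => c a) := by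
  refine ⟨fun _ => contDiff_const, 1, fun a j _ y => ?_⟩
  rw [iteratedDeriv_const, one_mul]
  split_ifs
  exacts [hc a, abs_zero.trans_le ((abs_nonneg _).trans (hc a))]

lemma add (hF : UniformDerivBound n ε F) (hG : UniformDerivBound n ε G) :
    UniformDerivBound n ε (fun a y => F a y + G a y) := by
  obtain ⟨C, hC⟩ := hF.2
  obtain ⟨D, hD⟩ := hG.2
  refine ⟨fun a => (hF.1 a).add (hG.1 a), C + D, fun a j hj y => ?_⟩
  have hjn : (j : WithTop ℕ∞) ≤ n := by exact_mod_cast hj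
  rw [iteratedDeriv_fun_add ((hF.1 a).of_le hjn).contDiffAt ((hG.1 a).of_le hjn).contDiffAt,
    add_mul]
  exact (abs_add_le _ _).trans (add_le_add (hC a j hj y) (hD a j hj y))

lemma mul_bounded (hF : UniformDerivBound n ε F) (hG : UniformDerivBound n (fun _ => 1) G) :
    UniformDerivBound n ε (fun a y => F a y * G a y) := by
  obtain ⟨C, hC⟩ := hF.2
  obtain ⟨D, hD⟩ := hG.2
  refine ⟨fun a => (hF.1 a).mul (hG.1 a), 2 ^ n * C * D, fun a j hj y => ?_⟩
  have hjn : (j : WithTop ℕ∞) ≤ n := by exact_mod_cast hj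
  have hCε : 0 ≤ C * ε a := (abs_nonneg _).trans (hC a 0 (Nat.zero_le _) y)
  have hD0 : 0 ≤ D := by simpa using (abs_nonneg _).trans (hD a 0 (Nat.zero_le _) y)
  rw [iteratedDeriv_fun_mul ((hF.1 a).of_le hjn).contDiffAt ((hG.1 a).of_le hjn).contDiffAt]
  calc _ ≤ ∑ m ∈ range (j + 1), (j.choose m : ℝ) * (C * ε a) * D := by
        refine (abs_sum_le_sum_abs _ _).trans (sum_le_sum fun m hm => ?_)
        rw [mem_range] at hm
        rw [abs_mul, abs_mul, Nat.abs_cast]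
        gcongr
        · exact hC a m (by omega) y
        · simpa using hD a (j - m) (by omega) y
    _ = 2 ^ j * (C * ε a) * D := by
        rw [← sum_mul, ← sum_mul, ← Nat.cast_sum, Nat.sum_range_choose, Nat.cast_pow,
          Nat.cast_ofNat]
    _ ≤ 2 ^ n * (C * ε a) * D := by gcongr; norm_num
    _ = 2 ^ n * C * D * ε a := by ring

lemma pow (hF : UniformDerivBound n (fun _ => 1) F) (m : ℕ) :
    UniformDerivBound n (fun _ => 1) (fun a y => F a y ^ m) := by
  induction m with
  | zero => simpa using const (n := n) (c := fun _ => (1 : ℝ)) (ε := fun _ => 1) (by simp)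
  | succ m ih => simpa only [pow_succ] using ih.mul_bounded hF

lemma deriv (hF : UniformDerivBound (n + 1) ε F) :
    UniformDerivBound n ε (fun a => deriv (F a)) := by
  obtain ⟨C, hC⟩ := hF.2
  refine ⟨fun a => ContDiff.deriv' (by exact_mod_cast hF.1 a), C, fun a j hj y => ?_⟩
  rw [← iteratedDeriv_succ']
  exact hC a (j + 1) (by omega) y

lemma of_deriv (hd : ∀ a, Differentiable ℝ (F a)) (h0 : ∃ C, ∀ a y, |F a y| ≤ C * ε a)
    (hF' : UniformDerivBound n ε (fun a => _root_.deriv (F a))) :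
    UniformDerivBound (n + 1) ε F := by
  obtain ⟨C₀, hC₀⟩ := h0
  obtain ⟨C, hC⟩ := hF'.2
  refine ⟨fun a => ?_, C₀ + C, fun a j hj y => ?_⟩
  · exact_mod_cast contDiff_succ_iff_deriv.mpr ⟨hd a, by simp, hF'.1 a⟩
  rw [add_mul]
  rcases j with _ | j
  · have hCε : 0 ≤ C * ε a := (abs_nonneg _).trans (hC a 0 (Nat.zero_le _) y)
    simpa using (hC₀ a y).trans (le_add_of_nonneg_right hCε)
  · have hC₀ε : 0 ≤ C₀ * ε a := (abs_nonneg _).trans (hC₀ a y)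
    rw [iteratedDeriv_succ']
    exact (hC a j (by omega) y).trans (le_add_of_nonneg_left hC₀ε)

lemma comp {g f : ι → ℝ → ℝ} (hg : UniformDerivBound n ε g) (hf : ∀ a, Differentiable ℝ (f a))
    (hf' : UniformDerivBound n (fun _ => 1) (fun a => _root_.deriv (f a))) :
    UniformDerivBound n ε (fun a y => g a (f a y)) := by
  obtain ⟨C, hC⟩ := hg.2
  obtain ⟨D, hD⟩ := hf'.2
  have hfC : ∀ a, ContDiff ℝ n (f a) := fun a =>
    (contDiff_succ_iff_deriv.mpr ⟨hf a, by simp, hf'.1 a⟩).of_le le_self_add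
  set E := max D 1
  have hE : 1 ≤ E := le_max_right _ _
  refine ⟨fun a => (hg.1 a).comp (hfC a), n.factorial * C * E ^ n, fun a j hj y => ?_⟩
  have hCε : 0 ≤ C * ε a := (abs_nonneg _).trans (hC a 0 (Nat.zero_le _) (f a y))
  have key := norm_iteratedFDeriv_comp_le (hg.1 a) (hfC a) (by exact_mod_cast hj) y
    (C := C * ε a) (D := E) (fun m hm => by
      rw [norm_iteratedFDeriv_eq_norm_iteratedDeriv, Real.norm_eq_abs]
      exact hC a m (hm.trans hj) _) (fun m hm1 hmj => by
      rw [norm_iteratedFDeriv_eq_norm_iteratedDeriv, Real.norm_eq_abs]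
      obtain ⟨m, rfl⟩ := Nat.exists_eq_add_of_le' hm1
      rw [iteratedDeriv_succ']
      calc _ ≤ D * 1 := hD a m (by omega) y
        _ ≤ E := by simp [E]
        _ ≤ E ^ (m + 1) := le_self_pow₀ hE (by omega))
  rw [norm_iteratedFDeriv_eq_norm_iteratedDeriv, Real.norm_eq_abs] at key
  calc _ ≤ j.factorial * (C * ε a) * E ^ j := key
    _ ≤ n.factorial * (C * ε a) * E ^ n := by gcongr
    _ = n.factorial * C * E ^ n * ε a := by ring

end UniformDerivBound

end UniformDerivBound

/-- The paper's `β_{l,r}`, as functions of `h = τ'`. -/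
noncomputable def expansionCoeff (h : ℝ → ℝ) : ℕ → ℕ → ℝ → ℝ
  | 0, 0 => fun y => h y - 1
  | 0, _ + 1 => fun _ => 0
  | l + 1, 0 => deriv (expansionCoeff h l 0)
  | l + 1, r + 1 => fun y => expansionCoeff h l r y * h y +
      deriv (expansionCoeff h l (r + 1)) y + if r = l then h y - 1 else 0

lemma expansionCoeff_eq_zero_of_lt (h : ℝ → ℝ) {l r : ℕ} (hlr : l < r) :
    expansionCoeff h l r = fun _ => 0 := by
  induction l generalizing r with
  | zero => obtain ⟨r, rfl⟩ := Nat.exists_eq_add_of_lt hlr; rfl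
  | succ l ih =>
    obtain ⟨r, rfl⟩ := Nat.exists_eq_add_of_le' (Nat.one_le_of_lt hlr)
    funext y
    simp [expansionCoeff, ih (by omega : l < r), ih (by omega : l < r + 1),
      show r ≠ l by omega]

lemma contDiff_expansionCoeff {h : ℝ → ℝ} {m l : ℕ} (hh : ContDiff ℝ (m + l : ℕ) h) (r : ℕ) :
    ContDiff ℝ m (expansionCoeff h l r) := by
  induction l generalizing m r with
  | zero =>
    rcases r with _ | r
    · exact hh.sub contDiff_const
    · exact contDiff_const
  | succ l ih =>
    have ih' : ∀ r, ContDiff ℝ (m + 1 : ℕ) (expansionCoeff h l r) :=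
      ih (by rwa [Nat.add_right_comm])
    have hh' : ContDiff ℝ m h := hh.of_le (by exact_mod_cast Nat.le_add_right m _)
    rcases r with _ | r
    · exact ContDiff.deriv' (by exact_mod_cast ih' 0)
    · refine ((((ih' r).of_le (by exact_mod_cast Nat.le_succ m)).mul hh').add
        (ContDiff.deriv' (by exact_mod_cast ih' (r + 1)))).add ?_
      split_ifs
      exacts [hh'.sub contDiff_const, contDiff_const]

theorem iteratedDeriv_comp_mul_deriv {τ φ : ℝ → ℝ} {n l : ℕ} (hτ : ContDiff ℝ (n + 1) τ)
    (hl : l ≤ n) (hφ : ContDiff ℝ l φ) (y : ℝ) :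
    iteratedDeriv l (fun x => φ (τ x) * deriv τ x) y = iteratedDeriv l φ (τ y) +
      ∑ r ∈ range (l + 1), expansionCoeff (deriv τ) l r y * iteratedDeriv r φ (τ y) := by
  induction l generalizing y with
  | zero => simp [expansionCoeff]; ring
  | succ l ih =>
    set β := expansionCoeff (deriv τ) l
    set p := fun r => iteratedDeriv r φ (τ y)
    have hφτ : ∀ r ≤ l, HasDerivAt (fun x => iteratedDeriv r φ (τ x)) (p (r + 1) * deriv τ y) y :=
      fun r hr => by
        simp only [p, iteratedDeriv_succ]
        exact ((hφ.differentiable_iteratedDeriv r (by exact_mod_cast Nat.lt_succ_of_le hr))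
          (τ y)).hasDerivAt.comp y (hτ.differentiable (by simp) y).hasDerivAt
    have hβ : ∀ r, DifferentiableAt ℝ (β r) y := fun r =>
      (contDiff_expansionCoeff (m := 1) ((ContDiff.deriv' hτ).of_le
        (by exact_mod_cast (by omega : 1 + l ≤ n))) r).differentiable one_ne_zero y
    have hsum := (hφτ l le_rfl).fun_add (HasDerivAt.fun_sum fun r hr =>
      (hβ r).hasDerivAt.fun_mul (hφτ r (Nat.le_of_lt_succ (mem_range.mp hr))))
    rw [iteratedDeriv_succ, funext (ih (by omega) (hφ.of_le (by exact_mod_cast Nat.le_succ l))),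
      hsum.deriv]
    have hshift : ∑ r ∈ range (l + 1), deriv (β (r + 1)) y * p (r + 1) + deriv (β 0) y * p 0 =
        ∑ r ∈ range (l + 1), deriv (β r) y * p r := by
      have hβl : β (l + 1) = fun _ => 0 := expansionCoeff_eq_zero_of_lt _ (Nat.lt_succ_self l)
      rw [← sum_range_succ' (fun r => deriv (β r) y * p r), sum_range_succ, hβl]
      simp
    have hmix : ∑ r ∈ range (l + 1), β r y * (p (r + 1) * deriv τ y) =
        ∑ r ∈ range (l + 1), β r y * deriv τ y * p (r + 1) :=
      sum_congr rfl fun _ _ => by ring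
    rw [sum_range_succ' _ (l + 1)]
    simp only [expansionCoeff, add_mul, sum_add_distrib, ite_mul, zero_mul, sum_ite_eq', mem_range, lt_add_one,
      if_true, hmix]
    linear_combination -hshift

theorem UniformDerivBound.expansionCoeff {ι : Type*} {ε : ι → ℝ} {h : ι → ℝ → ℝ} {N : ℕ}
    (hh : UniformDerivBound N (fun _ => 1) h)
    (hh1 : UniformDerivBound N ε (fun a y => h a y - 1)) {l m : ℕ} (hlm : m + l ≤ N) (r : ℕ) :
    UniformDerivBound m ε (fun a => expansionCoeff (h a) l r) := by
  induction l generalizing m r with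
  | zero =>
    rcases r with _ | r
    · exact hh1.mono (by omega)
    · exact UniformDerivBound.zero
  | succ l ih =>
    rcases r with _ | r
    · exact (ih (m := m + 1) (by omega) 0).deriv
    · have hite : UniformDerivBound m ε (fun a y => if r = l then h a y - 1 else 0) := by
        split_ifs
        exacts [hh1.mono (by omega), UniformDerivBound.zero]
      exact (((ih (by omega) r).mul_bounded (hh.mono (by omega))).add
        (ih (m := m + 1) (by omega) (r + 1)).deriv).add hite

section PerturbedIdentity

variable {b : ℝ → ℝ} {t : ℝ}

lemma one_add_div_mem_Icc {x : ℝ} (ht : 0 < t) (hx : 2 * |x| ≤ t) :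
    1 + x / t ∈ Set.Icc (1 / 2) (3 / 2) := by
  have : |x / t| ≤ 1 / 2 := by
    rw [abs_div, abs_of_pos ht, div_le_iff₀ ht]
    linarith
  constructor <;> linarith [abs_le.mp this]

lemma hasDerivAt_add_div {y : ℝ} (hb : DifferentiableAt ℝ b y) :
    HasDerivAt (fun y => y + b y / t) (1 + deriv b y / t) y :=
  (hasDerivAt_id y).add (hb.hasDerivAt.div_const t)

lemma strictMono_add_div (hbd : Differentiable ℝ b) (ht : 0 < t)
    (hb : ∀ y, 2 * |deriv b y| ≤ t) : StrictMono (fun y => y + b y / t) :=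
  strictMono_of_hasDerivAt_pos (fun y => hasDerivAt_add_div (hbd y))
    fun y => by linarith [(one_add_div_mem_Icc ht (hb y)).1]

lemma surjective_add_of_bounded {g : ℝ → ℝ} {C : ℝ} (hg : Continuous g) (hC : ∀ y, |g y| ≤ C) :
    Function.Surjective (fun y => y + g y) := by
  refine (continuous_id.fun_add hg).surjective ?_ ?_
  · simpa only [add_comm, id] using Filter.tendsto_atTop_add_left_of_le _ (-C)
      (fun y => (abs_le.mp (hC y)).1) Filter.tendsto_id
  · simpa only [add_comm, id] using Filter.tendsto_atBot_add_left_of_ge _ C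
      (fun y => (abs_le.mp (hC y)).2) Filter.tendsto_id

end PerturbedIdentity

/-- Families indexed by this type express that a constant depends only on `k` and `M`. -/
structure InverseData (k : ℕ) (M : ℝ) where
  b : ℝ → ℝ
  t : ℝ
  τ : ℝ → ℝ
  contDiff_b : ContDiff ℝ (k + 1) b
  abs_iteratedDeriv_b_le : ∀ l ≤ k + 1, ∀ y, |iteratedDeriv l b y| ≤ M
  one_le_t : 1 ≤ t
  two_mul_abs_deriv_b_le : ∀ y, 2 * |deriv b y| ≤ t
  τ_add_div : ∀ y, τ y + b (τ y) / t = y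

namespace InverseData

variable {k : ℕ} {M : ℝ} (S : InverseData k M)

lemma t_pos : 0 < S.t := one_pos.trans_le S.one_le_t

lemma differentiable_b : Differentiable ℝ S.b := S.contDiff_b.differentiable (by simp)

lemma abs_b_le (y : ℝ) : |S.b y| ≤ M := by simpa using S.abs_iteratedDeriv_b_le 0 (by omega) y

lemma abs_deriv_b_le (y : ℝ) : |deriv S.b y| ≤ M := by
  simpa using S.abs_iteratedDeriv_b_le 1 (by omega) y

lemma one_add_deriv_b_div_pos (x : ℝ) : 0 < 1 + deriv S.b x / S.t := by
  linarith [(one_add_div_mem_Icc S.t_pos (S.two_mul_abs_deriv_b_le x)).1]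

lemma contDiff_τ : ContDiff ℝ (k + 1) S.τ := by
  have hsurj : Function.Surjective (fun y => y + S.b y / S.t) := fun y => ⟨S.τ y, S.τ_add_div y⟩
  let e := ((strictMono_add_div S.differentiable_b S.t_pos S.two_mul_abs_deriv_b_le)
    |>.orderIsoOfSurjective _ hsurj).toHomeomorph
  have he : S.τ = e.symm := funext fun y => e.eq_symm_apply.mpr (S.τ_add_div y)
  rw [he]
  exact e.contDiff_symm_deriv (fun y => (S.one_add_deriv_b_div_pos y).ne')
    (fun y => hasDerivAt_add_div (S.differentiable_b y))
    (contDiff_id.add (S.contDiff_b.div_const _))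

lemma differentiable_τ : Differentiable ℝ S.τ := S.contDiff_τ.differentiable (by simp)

lemma hasDerivAt_τ (y : ℝ) : HasDerivAt S.τ (1 + deriv S.b (S.τ y) / S.t)⁻¹ y :=
  HasDerivAt.of_local_left_inverse S.differentiable_τ.continuous.continuousAt
    (hasDerivAt_add_div (S.differentiable_b _)) (S.one_add_deriv_b_div_pos _).ne'
    (Filter.Eventually.of_forall S.τ_add_div)

lemma deriv_τ_mem_Icc (y : ℝ) : deriv S.τ y ∈ Set.Icc (2 / 3) 2 := by
  obtain ⟨h₁, h₂⟩ := one_add_div_mem_Icc S.t_pos (S.two_mul_abs_deriv_b_le (S.τ y))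
  rw [(S.hasDerivAt_τ y).deriv]
  constructor
  · rw [le_inv_comm₀ (by norm_num) (by linarith)]; linarith
  · rw [inv_le_comm₀ (by linarith) (by norm_num)]; linarith

lemma abs_τ_sub_le (y : ℝ) : |S.τ y - y| ≤ M / S.t := by
  rw [show S.τ y - y = -(S.b (S.τ y) / S.t) by linarith [S.τ_add_div y], abs_neg, abs_div,
    abs_of_pos S.t_pos]
  exact div_le_div_of_nonneg_right (S.abs_b_le _) S.t_pos.le

lemma abs_deriv_τ_sub_one_le (y : ℝ) : |deriv S.τ y - 1| ≤ 2 * M / S.t := by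
  have hτ' : deriv S.τ y - 1 = -(deriv S.b (S.τ y) * deriv S.τ y) / S.t := by
    have := S.one_add_deriv_b_div_pos (S.τ y)
    rw [(S.hasDerivAt_τ y).deriv]
    field_simp
    ring
  obtain ⟨h₁, h₂⟩ := S.deriv_τ_mem_Icc y
  rw [hτ', abs_div, abs_neg, abs_mul, abs_of_pos S.t_pos,
    abs_of_pos (show 0 < deriv S.τ y by linarith)]
  refine div_le_div_of_nonneg_right ?_ S.t_pos.le
  calc |deriv S.b (S.τ y)| * deriv S.τ y ≤ M * 2 :=
        mul_le_mul (S.abs_deriv_b_le _) h₂ (by linarith) ((abs_nonneg _).trans (S.abs_deriv_b_le 0))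
    _ = 2 * M := mul_comm _ _

lemma hasDerivAt_deriv_τ (hk : 1 ≤ k) (y : ℝ) : HasDerivAt (deriv S.τ)
    (-S.t⁻¹ * (deriv (deriv S.b) (S.τ y) * deriv S.τ y ^ 3)) y := by
  have hb' : Differentiable ℝ (deriv S.b) :=
    (ContDiff.deriv' (n := k) S.contDiff_b).differentiable (by exact_mod_cast (by omega : k ≠ 0))
  have h := ((((hb' _).hasDerivAt.comp y (S.hasDerivAt_τ y)).div_const S.t).const_add 1).inv
    (S.one_add_deriv_b_div_pos (S.τ y)).ne'
  rw [(S.hasDerivAt_τ y).deriv, funext fun z => (S.hasDerivAt_τ z).deriv]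
  refine h.congr_deriv ?_
  simp only [Function.comp_apply]
  field_simp

lemma uniformDerivBound_deriv_deriv_b {n : ℕ} (hn : n + 1 ≤ k) :
    UniformDerivBound n (fun _ => 1) (fun S : InverseData k M => deriv (deriv S.b)) := by
  refine ⟨fun S => ?_, M, fun S j hj y => ?_⟩
  · exact ContDiff.deriv' (ContDiff.deriv' (S.contDiff_b.of_le
      (by exact_mod_cast (by omega : n + 1 + 1 ≤ k + 1))))
  · rw [← iteratedDeriv_succ', ← iteratedDeriv_succ', mul_one]
    exact S.abs_iteratedDeriv_b_le _ (by omega) y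

lemma uniformDerivBound_deriv_deriv_τ {n : ℕ} (hn : n + 1 ≤ k)
    (hτ' : UniformDerivBound n (fun _ => 1) (fun S : InverseData k M => deriv S.τ)) :
    UniformDerivBound n (fun S => S.t⁻¹) (fun S : InverseData k M => deriv (deriv S.τ)) := by
  have h := (UniformDerivBound.const (n := n) (ε := fun S => S.t⁻¹)
    (c := fun S : InverseData k M => -S.t⁻¹)
    fun S => by simp [abs_of_pos S.t_pos]).mul_bounded
    (((uniformDerivBound_deriv_deriv_b hn).comp (fun S => S.differentiable_τ) hτ').mul_bounded
      (hτ'.pow 3))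
  convert h using 2 with S
  exact funext fun y => (S.hasDerivAt_deriv_τ (by omega) y).deriv

lemma uniformDerivBound_deriv_τ {n : ℕ} (hn : n ≤ k) :
    UniformDerivBound n (fun _ => 1) (fun S : InverseData k M => deriv S.τ) := by
  induction n with
  | zero =>
    refine ⟨fun S => contDiff_zero.mpr (S.contDiff_τ.continuous_deriv (by simp)), 2,
      fun S j hj y => ?_⟩
    obtain ⟨h₁, h₂⟩ := S.deriv_τ_mem_Icc y
    rw [Nat.le_zero.mp hj, iteratedDeriv_zero, abs_of_pos (by linarith)]
    linarith
  | succ n ih =>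
    refine UniformDerivBound.of_deriv (fun S => ?_) ⟨2, fun S y => ?_⟩
      ((uniformDerivBound_deriv_deriv_τ hn (ih (by omega))).mono_weight
        (fun S => inv_nonneg.mpr S.t_pos.le) fun S => inv_le_one_of_one_le₀ S.one_le_t)
    · exact (ContDiff.deriv' (n := k) S.contDiff_τ).differentiable
        (by exact_mod_cast (by omega : k ≠ 0))
    · obtain ⟨h₁, h₂⟩ := S.deriv_τ_mem_Icc y
      rw [abs_of_pos (by linarith)]
      linarith

lemma uniformDerivBound_deriv_τ_sub_one (hk : 1 ≤ k) :
    UniformDerivBound k (fun S => S.t⁻¹) (fun (S : InverseData k M) y => deriv S.τ y - 1) := by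
  obtain ⟨n, rfl⟩ := Nat.exists_eq_add_of_le' hk
  refine UniformDerivBound.of_deriv (fun S => ?_) ⟨2 * M, fun S y => ?_⟩ ?_
  · exact ((uniformDerivBound_deriv_τ le_rfl).1 S).differentiable (by simp) |>.sub_const 1
  · rw [← div_eq_mul_inv]
    exact S.abs_deriv_τ_sub_one_le y
  · convert uniformDerivBound_deriv_deriv_τ le_rfl (uniformDerivBound_deriv_τ (by omega)) using 2
    exact funext fun y => deriv_sub_const 1

lemma exists_sum_mul_abs_expansionCoeff_le (hk : 1 ≤ k) : ∃ C, ∀ S : InverseData k M, ∀ l ≤ k,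
    ∀ y, ∑ r ∈ range (l + 1), S.t * |expansionCoeff (deriv S.τ) l r y| ≤ C := by
  have hcoeff : ∀ p ∈ range (k + 1) ×ˢ range (k + 1), ∃ C, ∀ x : InverseData k M × ℝ,
      x.1.t * |expansionCoeff (deriv x.1.τ) p.1 p.2 x.2| ≤ C := by
    intro p hp
    obtain ⟨C, hC⟩ := (UniformDerivBound.expansionCoeff (uniformDerivBound_deriv_τ le_rfl)
      (uniformDerivBound_deriv_τ_sub_one hk) (m := 0) (l := p.1)
      (by simpa [Nat.lt_succ_iff] using (mem_product.mp hp).1) p.2).2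
    refine ⟨C, fun x => ?_⟩
    have := hC x.1 0 le_rfl x.2
    rw [iteratedDeriv_zero, ← div_eq_mul_inv, le_div_iff₀ x.1.t_pos] at this
    linarith
  obtain ⟨C, hC⟩ := exists_le_of_forall_exists_le _ hcoeff
  refine ⟨(k + 1) * C, fun S l hl y => ?_⟩
  have hmem : ∀ r ∈ range (l + 1), (l, r) ∈ range (k + 1) ×ˢ range (k + 1) := fun r hr => by
    simp only [mem_product, mem_range] at hr ⊢
    omega
  have hC₀ : 0 ≤ C := (mul_nonneg S.t_pos.le (abs_nonneg _)).trans (hC _ (hmem 0 (by simp)) (S, y))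
  calc ∑ r ∈ range (l + 1), S.t * |expansionCoeff (deriv S.τ) l r y|
      ≤ ∑ r ∈ range (l + 1), C := sum_le_sum fun r hr => hC _ (hmem r hr) (S, y)
    _ = (l + 1) * C := by simp
    _ ≤ (k + 1) * C := by gcongr

end InverseData

theorem stmt_4_general (k : ℕ) (hk : 1 ≤ k) (M : ℝ) :
    ∃ c K : ℝ, 0 < c ∧ 0 < K ∧
      ∀ (b : ℝ → ℝ), ContDiff ℝ (k + 1) b →
        (∀ l ≤ k + 1, ∀ y : ℝ, |iteratedDeriv l b y| ≤ M) →
        ∀ (i : ℕ), 1 ≤ i → (∀ y : ℝ, 2 * |deriv b y| ≤ (i : ℝ)) →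
          (StrictMono (fun y : ℝ => y + b y / i) ∧
            Function.Bijective (fun y : ℝ => y + b y / i) ∧
            ContDiff ℝ (k + 1) (fun y : ℝ => y + b y / i)) ∧
          ∀ τi : ℝ → ℝ, (∀ y : ℝ, τi y + b (τi y) / i = y) →
            ContDiff ℝ (k + 1) τi ∧
            (∀ y : ℝ, |τi y - y| ≤ K / i ∧ |deriv τi y - 1| ≤ K / i ∧
              c < deriv τi y ∧ deriv τi y ≤ K) ∧
            ∃ β : ℕ → ℕ → ℝ → ℝ,
              (∀ l ≤ k, ∀ y : ℝ,
                  ∑ r ∈ Finset.range (l + 1), (i : ℝ) * |β l r y| ≤ K) ∧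
              (∀ l ≤ k, ∀ φ : ℝ → ℝ, ContDiff ℝ l φ → ∀ y : ℝ,
                  iteratedDeriv l (fun x => φ (τi x) * deriv τi x) y =
                    iteratedDeriv l φ (τi y) +
                      ∑ r ∈ Finset.range (l + 1), β l r y * iteratedDeriv r φ (τi y)) := by
  obtain ⟨C, hC⟩ := InverseData.exists_sum_mul_abs_expansionCoeff_le (M := M) hk
  refine ⟨1 / 2, max (2 * |M| + 2) C, by norm_num, by positivity, fun b hb hbM i hi hib => ?_⟩
  have hi₀ : (0 : ℝ) < i := by exact_mod_cast hi
  have hbd : Differentiable ℝ b := hb.differentiable (by simp)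
  have hmono := strictMono_add_div hbd hi₀ hib
  refine ⟨⟨hmono, ⟨hmono.injective, surjective_add_of_bounded (C := M / i)
    (hb.continuous.div_const _) fun y => ?_⟩, contDiff_id.add (hb.div_const _)⟩, fun τ hτ => ?_⟩
  · rw [abs_div, Nat.abs_cast]
    exact div_le_div_of_nonneg_right (by simpa using hbM 0 (by omega) y) hi₀.le
  let S : InverseData k M := ⟨b, i, τ, hb, hbM, by exact_mod_cast hi, hib, hτ⟩
  refine ⟨S.contDiff_τ, fun y => ?_, fun l r => expansionCoeff (deriv τ) l r,
    fun l hl y => (hC S l hl y).trans (le_max_right _ _),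
    fun l hl φ hφ y => iteratedDeriv_comp_mul_deriv S.contDiff_τ hl hφ y⟩
  have hK := le_max_left (2 * |M| + 2) C
  have hM := le_abs_self M
  have hM₀ := abs_nonneg M
  obtain ⟨h₁, h₂⟩ : deriv τ y ∈ Set.Icc (2 / 3) 2 := S.deriv_τ_mem_Icc y
  refine ⟨(S.abs_τ_sub_le y).trans ?_, (S.abs_deriv_τ_sub_one_le y).trans ?_, by linarith,
    by linarith⟩
  all_goals exact div_le_div_of_nonneg_right (by linarith) hi₀.le

/-- Lemma inv-(ii): for `i ≥ 2‖b'‖_∞`, the map `y ↦ y + b(y)/i` is an increasing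
`C^{k+1}`-diffeomorphism of `ℝ`, whose inverse `τ_i` satisfies `|τ_i(y) − y| ≤ K/i`,
`|τ_i'(y) − 1| ≤ K/i`, `c < τ_i'(y) ≤ K`, together with the expansion
`[φ(τ_i(y))τ_i'(y)]^{(l)} = φ^{(l)}(τ_i(y)) + Σ_{r≤l} β^i_{l,r}(y)φ^{(r)}(τ_i(y))`
where `Σ_{r≤l} i|β^i_{l,r}(y)| ≤ K`; the constants `c, K` depend only on `k` and the
bound `M` on the derivatives of `b`, not on `i`. -/
theorem stmt_4 (k : ℕ) (hk : 1 ≤ k) (M : ℝ) (hM : 0 ≤ M) :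
    ∃ c K : ℝ, 0 < c ∧ 0 < K ∧
      ∀ (b : ℝ → ℝ), ContDiff ℝ (k + 1) b →
        (∀ l ≤ k + 1, ∀ y : ℝ, |iteratedDeriv l b y| ≤ M) →
        ∀ (i : ℕ), 1 ≤ i → (∀ y : ℝ, 2 * |deriv b y| ≤ (i : ℝ)) →
          (StrictMono (fun y : ℝ => y + b y / i) ∧
            Function.Bijective (fun y : ℝ => y + b y / i) ∧
            ContDiff ℝ (k + 1) (fun y : ℝ => y + b y / i)) ∧
          ∀ τi : ℝ → ℝ, (∀ y : ℝ, τi y + b (τi y) / i = y) →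
            ContDiff ℝ (k + 1) τi ∧
            (∀ y : ℝ, |τi y - y| ≤ K / i ∧ |deriv τi y - 1| ≤ K / i ∧
              c < deriv τi y ∧ deriv τi y ≤ K) ∧
            ∃ β : ℕ → ℕ → ℝ → ℝ,
              (∀ l ≤ k, ∀ y : ℝ,
                  ∑ r ∈ Finset.range (l + 1), (i : ℝ) * |β l r y| ≤ K) ∧
              (∀ l ≤ k, ∀ φ : ℝ → ℝ, ContDiff ℝ l φ → ∀ y : ℝ,
                  iteratedDeriv l (fun x => φ (τi x) * deriv τi x) y =
                    iteratedDeriv l φ (τi y) +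
                      ∑ r ∈ Finset.range (l + 1), β l r y * iteratedDeriv r φ (τi y)) :=
  stmt_4_general k hk M
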